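/- Let P be a graded poset and G a copresheaf of abelian groups on P, and suppose (P,G) admits a cellular form Λ. Then: (1) for every x ∈ P with r(x) > 0, the homomorphism ⊕_{y<x, r(y)=0} G(y) → G(x) formed by the extension maps of G is surjective; (2) for every x of rank 1, the differential ∂ maps Λ_x isomorphically onto ker(⊕_{y<x} G(y) → G(x)); (3) if every G(y) is free abelian, then every Λ_x is free abelian. -/

import Mathlib

/-!
In degree zero everything is read off from `H₀(Λ_{≤x}) ≅ G(x)`: this group is generated by
the rank-zero cells below `x`, and its relations are the boundaries of rank-one cells below
`x`; for `x` of rank one the only such cell group is `Λ_x`. Exactness of `Λ_{≤x}` in degree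
`r(x)`, where nothing of higher rank lies below `x`, makes `∂` injective on `Λ_x` whenever
`r(x) > 0`. Hence `Λ_x ≅ G(x)` in rank zero, while in positive rank `∂` embeds `Λ_x` into
`⊕_{y⋖x} Λ_y`, so freeness propagates up the ranks because submodules of free modules over a
PID are free. The latter is proved by well-ordering a basis and choosing, for each index `i`,
an element supported at indices `≤ i` whose `i`-th coefficient generates the ideal of all
such coefficients; these elements are triangular, hence form a basis.
-/

open CategoryTheory Classical

/-- A rank function making `P` a graded poset: minimal elements have rank `0`, the rank
increases by `1` along covering relations, and is strictly monotone. -/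
def IsGrading (P : Type) [PartialOrder P] (r : P → ℕ) : Prop :=
  (∀ x : P, IsMin x → r x = 0) ∧ (∀ x y : P, x ⋖ y → r y = r x + 1) ∧
    ∀ x y : P, x < y → r x < r y

/-- A cellular form of a pair `(P, G)` where `P` is a poset graded by `r` and `G` is a
copresheaf of abelian groups on `P` (a functor `P ⥤ AddCommGrp`).

It consists of a `P`-graded differential `ℤ`-module `Λ = ⊕_{x∈P} Λ_x`, the differential
being recorded by its components `δ x y : Λ_x →+ Λ_y`, together with the maps
`e x y : Λ_y →+ G(x)` (for `y ≤ x` of rank `0`) realising the isomorphism of copresheaves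
`(x ↦ H₀(Λ_{≤x})) ≅ G`, such that:

* `∂` maps `Λ_x` into `⊕_{y⋖x} Λ_y` (fields `delta_support`, `delta_fin`) and `∂∂ = 0`
  (field `delta_delta`); hence each `Λ_{≤x} = ⊕_{y≤x} Λ_y` is a chain complex graded by
  rank;
* `Λ_{≤x}` has trivial homology in all positive degrees (field `exact_pos`: every cycle
  of positive degree supported below `x` is a boundary of a chain supported below `x`);
* the copresheaf `x ↦ H₀(Λ_{≤x})` (whose extension maps are induced by the inclusions
  `Λ_{≤x} ↪ Λ_{≤x'}`) is isomorphic to `G` via the maps induced by `e` (fields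
  `e_natural`, `e_surj`, `e_ker`: `e` is compatible with the extension maps of `G`, and
  the induced map `H₀(Λ_{≤x}) → G(x)` is surjective and injective — an element of degree
  `0` maps to `0` iff it is a boundary). -/
structure CellularForm (P : Type) [PartialOrder P] (r : P → ℕ)
    (G : P ⥤ AddCommGrpCat.{0}) where
  Λ : P → Type
  [grp : ∀ x, AddCommGroup (Λ x)]
  δ : ∀ x y : P, Λ x →+ Λ y
  e : ∀ x y : P, y ≤ x → r y = 0 → (Λ y →+ G.obj x)
  delta_support : ∀ x y : P, ¬(y ⋖ x) → δ x y = 0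
  delta_fin : ∀ (x : P) (a : Λ x), {y : P | δ x y a ≠ 0}.Finite
  delta_delta : ∀ (x z : P) (a : Λ x), (∑ᶠ y : P, δ y z (δ x y a)) = 0
  exact_pos : ∀ (x : P) (q : ℕ) (a : ∀ y : P, Λ y),
    {y : P | a y ≠ 0}.Finite →
    (∀ y, a y ≠ 0 → y ≤ x ∧ r y = q + 1) →
    (∀ z, (∑ᶠ y : P, δ y z (a y)) = 0) →
    ∃ b : ∀ y : P, Λ y, {y : P | b y ≠ 0}.Finite ∧
      (∀ y, b y ≠ 0 → y ≤ x ∧ r y = q + 2) ∧ ∀ y, a y = ∑ᶠ w : P, δ w y (b w)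
  e_natural : ∀ (x x' y : P) (h : y ≤ x) (h' : x ≤ x') (h0 : r y = 0) (a : Λ y),
    G.map (homOfLE h') (e x y h h0 a) = e x' y (h.trans h') h0 a
  e_surj : ∀ (x : P) (g : G.obj x), ∃ a : ∀ y : P, Λ y,
    {y : P | a y ≠ 0}.Finite ∧ (∀ y, a y ≠ 0 → y ≤ x ∧ r y = 0) ∧
    (∑ᶠ y : P, if h : y ≤ x ∧ r y = 0 then e x y h.1 h.2 (a y) else 0) = g
  e_ker : ∀ (x : P) (a : ∀ y : P, Λ y), {y : P | a y ≠ 0}.Finite →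
    (∀ y, a y ≠ 0 → y ≤ x ∧ r y = 0) →
    ((∑ᶠ y : P, if h : y ≤ x ∧ r y = 0 then e x y h.1 h.2 (a y) else 0) = 0 ↔
      ∃ b : ∀ y : P, Λ y, {y : P | b y ≠ 0}.Finite ∧
        (∀ y, b y ≠ 0 → y ≤ x ∧ r y = 1) ∧ ∀ y, a y = ∑ᶠ w : P, δ w y (b w))

attribute [instance] CellularForm.grp

/-- The property, for a given `P`-graded differential `ℤ`-module `(Λ, δ)`, of being a
cellular form of `(P, G)`; see `CellularForm` for a description of the fields, the only
difference being that here the realising maps `e` are merely required to exist. -/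
structure IsCellularForm (P : Type) [PartialOrder P] (r : P → ℕ)
    (G : P ⥤ AddCommGrpCat.{0}) (Λ : P → Type) [inst : ∀ x, AddCommGroup (Λ x)]
    (δ : ∀ x y : P, Λ x →+ Λ y) : Prop where
  delta_support : ∀ x y : P, ¬(y ⋖ x) → δ x y = 0
  delta_fin : ∀ (x : P) (a : Λ x), {y : P | δ x y a ≠ 0}.Finite
  delta_delta : ∀ (x z : P) (a : Λ x), (∑ᶠ y : P, δ y z (δ x y a)) = 0
  exact_pos : ∀ (x : P) (q : ℕ) (a : ∀ y : P, Λ y),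
    {y : P | a y ≠ 0}.Finite →
    (∀ y, a y ≠ 0 → y ≤ x ∧ r y = q + 1) →
    (∀ z, (∑ᶠ y : P, δ y z (a y)) = 0) →
    ∃ b : ∀ y : P, Λ y, {y : P | b y ≠ 0}.Finite ∧
      (∀ y, b y ≠ 0 → y ≤ x ∧ r y = q + 2) ∧ ∀ y, a y = ∑ᶠ w : P, δ w y (b w)
  hom_zero : ∃ e : ∀ x y : P, y ≤ x → r y = 0 → (Λ y →+ G.obj x),
    (∀ (x x' y : P) (h : y ≤ x) (h' : x ≤ x') (h0 : r y = 0) (a : Λ y),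
      G.map (homOfLE h') (e x y h h0 a) = e x' y (h.trans h') h0 a) ∧
    (∀ (x : P) (g : G.obj x), ∃ a : ∀ y : P, Λ y,
      {y : P | a y ≠ 0}.Finite ∧ (∀ y, a y ≠ 0 → y ≤ x ∧ r y = 0) ∧
      (∑ᶠ y : P, if h : y ≤ x ∧ r y = 0 then e x y h.1 h.2 (a y) else 0) = g) ∧
    (∀ (x : P) (a : ∀ y : P, Λ y), {y : P | a y ≠ 0}.Finite →
      (∀ y, a y ≠ 0 → y ≤ x ∧ r y = 0) →
      ((∑ᶠ y : P, if h : y ≤ x ∧ r y = 0 then e x y h.1 h.2 (a y) else 0) = 0 ↔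
        ∃ b : ∀ y : P, Λ y, {y : P | b y ≠ 0}.Finite ∧
          (∀ y, b y ≠ 0 → y ≤ x ∧ r y = 1) ∧ ∀ y, a y = ∑ᶠ w : P, δ w y (b w)))

section FreeSubmodule

open Finsupp

variable {R I : Type*} [LinearOrder I]

theorem Finsupp.linearIndepOn_of_triangular [Ring R] [NoZeroDivisors R] {v : I → I →₀ R}
    {s : Set I} (hv : ∀ i, v i ∈ supported R R (Set.Iic i)) (hs : ∀ i ∈ s, v i i ≠ 0) :
    LinearIndepOn R v s := by
  rw [linearIndepOn_iff]
  intro l hl hcomb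
  by_contra hl0
  have hne : l.support.Nonempty := support_nonempty_iff.2 hl0
  set m := l.support.max' hne
  have hm : m ∈ l.support := l.support.max'_mem hne
  have hlead : linearCombination R v l m = l m * v m m := by
    rw [linearCombination_apply, sum_apply, Finsupp.sum, Finset.sum_eq_single m]
    · rfl
    · intro j hj hjm
      have hjm : j < m := lt_of_le_of_ne (l.support.le_max' j hj) hjm
      rw [smul_apply, notMem_support_iff.1 fun h => hjm.not_ge ((mem_supported _ _).1 (hv j) h),
        smul_zero]
    · exact fun h => absurd hm h
  refine mul_ne_zero (mem_support_iff.1 hm) (hs m (hl hm)) ?_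
  rw [← hlead, hcomb, coe_zero, Pi.zero_apply]

theorem Finsupp.le_span_of_leading [Ring R] [WellFoundedLT I] {N : Submodule R (I →₀ R)}
    {x : I → I →₀ R} (hxN : ∀ i, x i ∈ N) (hx : ∀ i, x i ∈ supported R R (Set.Iic i))
    (hlead : ∀ i, ∀ f ∈ N, f ∈ supported R R (Set.Iic i) → ∃ c, f i = c * x i i) :
    N ≤ Submodule.span R (x '' {i | x i i ≠ 0}) := by
  -- Induct on the largest index `m` of the support: subtracting a multiple of `x m` kills the
  -- coefficient at `m` and creates none above it.
  suffices ∀ M : WithBot I, ∀ f ∈ N, f.support.max = M →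
      f ∈ Submodule.span R (x '' {i | x i i ≠ 0}) from fun f hf => this _ f hf rfl
  intro M
  induction M using WellFoundedLT.induction with
  | _ M IH =>
  intro f hf hM
  induction M using WithBot.recBotCoe with
  | bot => simp [support_eq_empty.1 (Finset.max_eq_bot.1 hM)]
  | coe m =>
  have hm : m ∈ f.support := Finset.mem_of_max hM
  have hfle : ∀ j ∈ f.support, j ≤ m := fun j hj =>
    WithBot.coe_le_coe.1 (hM ▸ Finset.le_max hj)
  obtain ⟨c, hc⟩ := hlead m f hf ((mem_supported _ _).2 hfle)
  have hxm : x m m ≠ 0 := fun h => mem_support_iff.1 hm (by rw [hc, h, mul_zero])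
  set f' := f - c • x m
  have hvanish : ∀ j, m ≤ j → f' j = 0 := by
    intro j hj
    rcases hj.eq_or_lt with rfl | hj
    · simp [f', hc]
    · have h1 : f j = 0 := notMem_support_iff.1 fun h => hj.not_ge (hfle j h)
      have h2 : x m j = 0 :=
        notMem_support_iff.1 fun h => hj.not_ge ((mem_supported _ _).1 (hx m) h)
      simp [f', h1, h2]
  have hlt : f'.support.max < m := by
    rw [Finset.max_eq_sup_coe, Finset.sup_lt_iff (WithBot.bot_lt_coe m)]
    exact fun j hj =>
      WithBot.coe_lt_coe.2 (lt_of_not_ge fun h => mem_support_iff.1 hj (hvanish j h))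
  rw [← sub_add_cancel f (c • x m)]
  exact Submodule.add_mem _ (IH _ hlt f' (N.sub_mem hf (N.smul_mem c (hxN m))) rfl)
    (Submodule.smul_mem _ c (Submodule.subset_span ⟨m, hxm, rfl⟩))

theorem Finsupp.exists_leading_family [CommRing R] [IsPrincipalIdealRing R]
    (N : Submodule R (I →₀ R)) :
    ∃ x : I → I →₀ R, (∀ i, x i ∈ N) ∧ (∀ i, x i ∈ supported R R (Set.Iic i)) ∧
      ∀ i, ∀ f ∈ N, f ∈ supported R R (Set.Iic i) → ∃ c, f i = c * x i i := by
  have hleading : ∀ i, ∃ y ∈ N ⊓ supported R R (Set.Iic i),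
      ∀ f ∈ N ⊓ supported R R (Set.Iic i), ∃ c, f i = c * y i := by
    intro i
    set L := (N ⊓ supported R R (Set.Iic i)).map (lapply i)
    obtain ⟨y, hy, hyi⟩ := Submodule.mem_map.1 (Submodule.IsPrincipal.generator_mem L)
    refine ⟨y, hy, fun f hf => ?_⟩
    obtain ⟨c, hc⟩ := (Submodule.IsPrincipal.mem_iff_eq_smul_generator L).1
      (Submodule.mem_map_of_mem (f := lapply i) hf)
    exact ⟨c, by rwa [← smul_eq_mul, ← lapply_apply (R := R) i y, hyi]⟩
  choose x hx hlead using hleading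
  exact ⟨x, fun i => (hx i).1, fun i => (hx i).2, fun i f hf hs => hlead i f ⟨hf, hs⟩⟩

theorem Finsupp.free_submodule [CommRing R] [IsDomain R] [IsPrincipalIdealRing R]
    [WellFoundedLT I] (N : Submodule R (I →₀ R)) : Module.Free R N := by
  obtain ⟨x, hxN, hx, hlead⟩ := exists_leading_family N
  have hN : N = Submodule.span R (x '' {i | x i i ≠ 0}) :=
    le_antisymm (le_span_of_leading hxN hx hlead)
      (Submodule.span_le.2 (Set.image_subset_iff.2 fun i _ => hxN i))
  have hli : LinearIndepOn R x {i | x i i ≠ 0} := linearIndepOn_of_triangular hx fun _ hi => hi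
  rw [Set.image_eq_range] at hN
  subst hN
  exact Module.Free.of_basis (Module.Basis.span hli)

theorem Module.Free.submodule [CommRing R] [IsDomain R] [IsPrincipalIdealRing R] {M : Type*}
    [AddCommGroup M] [Module R M] [Module.Free R M] (N : Submodule R M) : Module.Free R N := by
  let b := Module.Free.chooseBasis R M
  let _ : LinearOrder (Module.Free.ChooseBasisIndex R M) :=
    IsWellOrder.linearOrder WellOrderingRel
  have : WellFoundedLT (Module.Free.ChooseBasisIndex R M) :=
    ⟨IsWellFounded.wf (r := WellOrderingRel)⟩
  have := Finsupp.free_submodule (N.map b.repr.toLinearMap)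
  exact Module.Free.of_equiv (b.repr.submoduleMap N).symm

end FreeSubmodule

theorem Pi.eq_of_single_apply_ne_zero {I : Type*} {f : I → Type*} [DecidableEq I]
    [∀ i, Zero (f i)] {i j : I} {a : f i} (h : Pi.single i a j ≠ 0) : j = i :=
  by_contra fun hne => h (Pi.single_eq_of_ne hne a)

theorem Pi.finite_single_ne_zero {I : Type*} {f : I → Type*} [DecidableEq I]
    [∀ i, Zero (f i)] (i : I) (a : f i) : {j | Pi.single i a j ≠ 0}.Finite :=
  (Set.finite_singleton i).subset fun _ => eq_of_single_apply_ne_zero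

theorem finsum_apply_eq_of_forall_ne {I M : Type*} {f : I → Type*} [AddCommMonoid M]
    [∀ i, AddCommMonoid (f i)] (φ : ∀ i, f i →+ M) {b : ∀ i, f i} {i : I}
    (hb : ∀ j ≠ i, b j = 0) : ∑ᶠ j, φ j (b j) = φ i (b i) :=
  finsum_eq_single _ i fun j hj => by rw [hb j hj, map_zero]

noncomputable def DFinsupp.ofFiniteSupport {I : Type*} {β : I → Type*} [∀ i, Zero (β i)]
    (g : ∀ i, β i) (hg : {i | g i ≠ 0}.Finite) : Π₀ i, β i :=
  DFinsupp.mk hg.toFinset fun i => g i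

@[simp]
theorem DFinsupp.ofFiniteSupport_apply {I : Type*} {β : I → Type*} [∀ i, Zero (β i)]
    (g : ∀ i, β i) (hg : {i | g i ≠ 0}.Finite) (i : I) : ofFiniteSupport g hg i = g i := by
  rw [ofFiniteSupport, mk_apply]
  split_ifs with h
  · rfl
  · exact (by simpa using h : g i = 0).symm

noncomputable def AddMonoidHom.toDFinsupp {A I : Type*} {β : I → Type*} [AddCommMonoid A]
    [∀ i, AddCommMonoid (β i)] (φ : ∀ i, A →+ β i) (hφ : ∀ a, {i | φ i a ≠ 0}.Finite) :
    A →+ Π₀ i, β i where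
  toFun a := DFinsupp.ofFiniteSupport (fun i => φ i a) (hφ a)
  map_zero' := DFinsupp.ext fun i => by simp
  map_add' a b := DFinsupp.ext fun i => by simp

@[simp]
theorem AddMonoidHom.toDFinsupp_apply {A I : Type*} {β : I → Type*} [AddCommMonoid A]
    [∀ i, AddCommMonoid (β i)] (φ : ∀ i, A →+ β i) (hφ : ∀ a, {i | φ i a ≠ 0}.Finite)
    (a : A) (i : I) : toDFinsupp φ hφ a i = φ i a :=
  DFinsupp.ofFiniteSupport_apply _ _ i

variable {P : Type} [PartialOrder P] {r : P → ℕ} {G : P ⥤ AddCommGrpCat.{0}}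

theorem IsGrading.strictMono (hr : IsGrading P r) : StrictMono r := hr.2.2

theorem IsGrading.eq_of_le_of_rank_le (hr : IsGrading P r) {x y : P} (h : y ≤ x)
    (h' : r x ≤ r y) : y = x :=
  h.eq_or_lt.resolve_right fun hlt => (hr.strictMono hlt).not_ge h'

namespace CellularForm

variable (C : CellularForm P r G)

/-- The degree-zero map `Λ_{≤x} → G(x)`; the fields `e_surj` and `e_ker` are statements about
it, spelled out. -/
noncomputable def augmentation (x : P) (a : ∀ y, C.Λ y) : G.obj x :=
  ∑ᶠ y, if h : y ≤ x ∧ r y = 0 then C.e x y h.1 h.2 (a y) else 0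

theorem e_eq_map {x y : P} (h : y ≤ x) (h0 : r y = 0) (a : C.Λ y) :
    C.e x y h h0 a = G.map (homOfLE h) (C.e y y le_rfl h0 a) :=
  (C.e_natural y x y le_rfl h h0 a).symm

theorem augmentation_eq_of_forall_ne {x y : P} (h : y ≤ x) (h0 : r y = 0) {a : ∀ w, C.Λ w}
    (ha : ∀ w ≠ y, a w = 0) : C.augmentation x a = C.e x y h h0 (a y) := by
  rw [augmentation, finsum_eq_single _ y fun w hw => by simp [ha w hw], dif_pos ⟨h, h0⟩]

theorem augmentation_eq_of_pos {x : P} (hx : 0 < r x) (a : ∀ y, C.Λ y) :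
    C.augmentation x a = ∑ᶠ y, if h : y < x ∧ r y = 0 then
      G.map (homOfLE h.1.le) (C.e y y le_rfl h.2 (a y)) else 0 := by
  refine finsum_congr fun y => ?_
  by_cases h : y < x ∧ r y = 0
  · rw [dif_pos ⟨h.1.le, h.2⟩, dif_pos h, e_eq_map]
  · rw [dif_neg h, dif_neg fun h' => h ⟨h'.1.lt_of_ne (by rintro rfl; omega), h'.2⟩]

theorem e_self_bijective (hr : IsGrading P r) {x : P} (h0 : r x = 0) :
    Function.Bijective (C.e x x le_rfl h0) := by
  have hbelow : ∀ y, y ≤ x → y = x := fun y hy => hr.eq_of_le_of_rank_le hy (by omega)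
  constructor
  · refine (injective_iff_map_eq_zero _).2 fun c hc => ?_
    have hsupp : ∀ y, Pi.single x c y ≠ 0 → y ≤ x ∧ r y = 0 := fun y hy => by
      obtain rfl := Pi.eq_of_single_apply_ne_zero hy; exact ⟨le_rfl, h0⟩
    obtain ⟨b, -, hb, hcb⟩ := (C.e_ker x _ (Pi.finite_single_ne_zero x c) hsupp).1 <| by
      change C.augmentation x _ = 0
      rw [augmentation_eq_of_forall_ne C le_rfl h0 fun w hw => Pi.single_eq_of_ne hw c,
        Pi.single_eq_same, hc]
    have hb0 : ∀ w, b w = 0 := fun w => by_contra fun hw => by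
      obtain ⟨hwx, hw1⟩ := hb w hw
      rw [hbelow w hwx, h0] at hw1
      omega
    simpa [hb0] using hcb x
  · intro g
    obtain ⟨a, -, ha, hag⟩ := C.e_surj x g
    exact ⟨a x, (C.augmentation_eq_of_forall_ne le_rfl h0 fun w hw =>
      by_contra fun h => hw (hbelow w (ha w h).1)).symm.trans hag⟩

noncomputable def rankZeroEquiv (hr : IsGrading P r) {x : P} (h0 : r x = 0) :
    C.Λ x ≃+ G.obj x :=
  AddEquiv.ofBijective (C.e x x le_rfl h0) (C.e_self_bijective hr h0)

@[simp]
theorem e_rankZeroEquiv_symm_apply (hr : IsGrading P r) {x : P} (h0 : r x = 0) (g : G.obj x) :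
    C.e x x le_rfl h0 ((C.rankZeroEquiv hr h0).symm g) = g :=
  (C.rankZeroEquiv hr h0).apply_symm_apply g

theorem covBy_of_delta_ne_zero {x y : P} {a : C.Λ x} (h : C.δ x y a ≠ 0) : y ⋖ x :=
  by_contra fun hcov => h (by rw [C.delta_support x y hcov]; rfl)

theorem eq_zero_of_delta_eq_zero (hr : IsGrading P r) {x : P} (hx : 0 < r x) {a : C.Λ x}
    (ha : ∀ y, y ⋖ x → C.δ x y a = 0) : a = 0 := by
  -- `a` is a cycle of positive degree in `Λ_{≤x}`, and no cell of higher rank lies below `x`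
  -- to bound it.
  have hsupp : ∀ y, Pi.single x a y ≠ 0 → y ≤ x ∧ r y = (r x - 1) + 1 := fun y hy => by
    obtain rfl := Pi.eq_of_single_apply_ne_zero hy; exact ⟨le_rfl, by omega⟩
  have hcycle : ∀ z, ∑ᶠ y, C.δ y z (Pi.single x a y) = 0 := fun z => by
    rw [finsum_apply_eq_of_forall_ne (fun y => C.δ y z) fun y hy => Pi.single_eq_of_ne hy a,
      Pi.single_eq_same]
    by_cases hz : z ⋖ x
    · exact ha z hz
    · rw [C.delta_support x z hz]; rfl
  obtain ⟨b, -, hb, hab⟩ :=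
    C.exact_pos x (r x - 1) _ (Pi.finite_single_ne_zero x a) hsupp hcycle
  have hb0 : ∀ w, b w = 0 := fun w => by_contra fun hw => by
    obtain ⟨hwx, hw2⟩ := hb w hw
    have := hr.strictMono.monotone hwx
    omega
  simpa [hb0] using hab x

theorem delta_injective (hr : IsGrading P r) {x : P} (hx : 0 < r x) :
    Function.Injective fun (a : C.Λ x) (y : {y // y ⋖ x}) => C.δ x y a := fun a a' h =>
  sub_eq_zero.1 <| C.eq_zero_of_delta_eq_zero hr hx fun y hy => by
    rw [map_sub, sub_eq_zero]
    exact congrFun h ⟨y, hy⟩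

theorem exists_sum_map_eq (C : CellularForm P r G) {x : P} (hx : 0 < r x) (g : G.obj x) :
    ∃ a : ∀ y : P, G.obj y, {y : P | a y ≠ 0}.Finite ∧ (∀ y, a y ≠ 0 → y < x ∧ r y = 0) ∧
      (∑ᶠ y : P, if h : y < x then G.map (homOfLE h.le) (a y) else 0) = g := by
  obtain ⟨c, hcfin, hc, hcg⟩ := C.e_surj x g
  have hne : ∀ y, (if h0 : r y = 0 then C.e y y le_rfl h0 (c y) else 0) ≠ 0 →
      c y ≠ 0 ∧ r y = 0 := fun y hy => by
    split_ifs at hy with h0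
    · exact ⟨fun h => hy (by rw [h, map_zero]), h0⟩
    · exact absurd rfl hy
  refine ⟨fun y => if h0 : r y = 0 then C.e y y le_rfl h0 (c y) else 0,
    hcfin.subset fun y hy => (hne y hy).1, fun y hy => ?_, ?_⟩
  · obtain ⟨hcy, h0⟩ := hne y hy
    exact ⟨(hc y hcy).1.lt_of_ne (by rintro rfl; omega), h0⟩
  · rw [← hcg]
    change _ = C.augmentation x c
    rw [augmentation_eq_of_pos C hx]
    refine finsum_congr fun y => ?_
    by_cases hy : y < x <;> by_cases h0 : r y = 0 <;> simp [hy, h0]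

theorem sum_map_e_delta_eq_zero (hr : IsGrading P r) {x : P} (hx : r x = 1) (a : C.Λ x) :
    (∑ᶠ y : P, if h : y < x ∧ r y = 0 then
      G.map (homOfLE h.1.le) (C.e y y le_rfl h.2 (C.δ x y a)) else 0) = 0 := by
  refine (C.augmentation_eq_of_pos (by omega) fun y => C.δ x y a).symm.trans ?_
  have hsupp : ∀ y, C.δ x y a ≠ 0 → y ≤ x ∧ r y = 0 := fun y hy => by
    have hcov := C.covBy_of_delta_ne_zero hy
    have := hr.2.1 y x hcov
    exact ⟨hcov.le, by omega⟩
  refine (C.e_ker x _ (C.delta_fin x a) hsupp).2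
    ⟨Pi.single x a, Pi.finite_single_ne_zero x a, fun y hy => ?_, fun y => ?_⟩
  · obtain rfl := Pi.eq_of_single_apply_ne_zero hy
    exact ⟨le_rfl, hx⟩
  · rw [finsum_apply_eq_of_forall_ne (fun w => C.δ w y) fun w hw => Pi.single_eq_of_ne hw a,
      Pi.single_eq_same]

theorem exists_e_delta_eq (hr : IsGrading P r) {x : P} (hx : r x = 1) (g : ∀ y : P, G.obj y)
    (hgfin : {y : P | g y ≠ 0}.Finite) (hglt : ∀ y, g y ≠ 0 → y < x)
    (hsum : (∑ᶠ y : P, if h : y < x then G.map (homOfLE h.le) (g y) else 0) = 0) :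
    ∃ a : C.Λ x, ∀ (y : P) (_ : y < x) (h0 : r y = 0),
      C.e y y le_rfl h0 (C.δ x y a) = g y := by
  have hrank : ∀ y, y < x → r y = 0 := fun y hy => by have := hr.strictMono hy; omega
  let A : ∀ y, C.Λ y := fun y =>
    if h0 : r y = 0 then (C.rankZeroEquiv hr h0).symm (g y) else 0
  have hA : ∀ y, g y = 0 → A y = 0 := fun y hg => by simp [A, hg]
  have hAsupp : ∀ y, A y ≠ 0 → y ≤ x ∧ r y = 0 := fun y hy => by
    have := hglt y (mt (hA y) hy)
    exact ⟨this.le, hrank y this⟩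
  have hAug : C.augmentation x A = 0 := by
    rw [C.augmentation_eq_of_pos (by omega)]
    refine Eq.trans (finsum_congr fun y => ?_) hsum
    by_cases hy : y < x
    · simp [hy, hrank y hy, A]
    · simp [hy]
  -- The lift `A` of `g` is a boundary, and below a rank-one `x` only `Λ_x` itself has rank one.
  obtain ⟨b, -, hb, hAb⟩ := (C.e_ker x A (hgfin.subset fun y => mt (hA y)) hAsupp).1 hAug
  have hbx : ∀ w ≠ x, b w = 0 := fun w hw => by_contra fun h =>
    hw (hr.eq_of_le_of_rank_le (hb w h).1 (by rw [hx, (hb w h).2]))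
  refine ⟨b x, fun y _ h0 => ?_⟩
  rw [← finsum_apply_eq_of_forall_ne (fun w => C.δ w y) hbx, ← hAb y]
  simp [A, h0]

theorem free_of_rank_eq (hr : IsGrading P r) (hG : ∀ y : P, Module.Free ℤ (G.obj y)) (n : ℕ) :
    ∀ x, r x = n → Module.Free ℤ (C.Λ x) := by
  induction n using Nat.strong_induction_on with
  | _ n IH =>
  intro x hn
  rcases Nat.eq_zero_or_pos n with h0 | hpos
  · subst h0
    exact Module.Free.of_equiv (C.rankZeroEquiv hr hn).toIntLinearEquiv.symm
  · have : ∀ y : {y // y ⋖ x}, Module.Free ℤ (C.Λ y) := fun y =>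
      IH _ (hn ▸ hr.strictMono y.2.lt) y rfl
    let F := AddMonoidHom.toDFinsupp (fun y : {y // y ⋖ x} => C.δ x y)
      fun a => (C.delta_fin x a).preimage Subtype.val_injective.injOn
    have hF : Function.Injective F := fun a a' h => C.delta_injective hr (hn ▸ hpos) <|
      funext fun y => by simpa [F] using DFunLike.congr_fun h y
    have := Module.Free.submodule (LinearMap.range F.toIntLinearMap)
    exact Module.Free.of_equiv (LinearEquiv.ofInjective F.toIntLinearMap hF).symm

end CellularForm

/-- **Statement 9 (properties of cellular forms).**  Let `(P, r)` be a graded poset, `G`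
a copresheaf of abelian groups on `P`, and `Λ` a cellular form of `(P, G)`.  Then:
(1) for every `x` with `r(x) > 0`, the map `⊕_{y<x, r(y)=0} G(y) → G(x)` formed by the
extension maps of `G` is surjective;
(2) for every `x` of rank `1`, the differential `∂` maps `Λ_x` isomorphically onto
`ker(⊕_{y<x} G(y) → G(x))` (the rank-zero pieces `Λ_y` being identified with `G(y)` via
`e`): the family of components `(δ x y)_y` is injective on `Λ_x`, lands in the kernel,
and reaches every family in the kernel;
(3) if every `G(y)` is free abelian then every `Λ_x` is free abelian. -/
theorem statement9 (P : Type) [PartialOrder P] (r : P → ℕ) (hr : IsGrading P r)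
    (G : P ⥤ AddCommGrpCat.{0}) (C : CellularForm P r G) :
    (∀ x : P, 0 < r x → ∀ g : G.obj x, ∃ a : ∀ y : P, G.obj y,
      {y : P | a y ≠ 0}.Finite ∧ (∀ y, a y ≠ 0 → y < x ∧ r y = 0) ∧
      (∑ᶠ y : P, if h : y < x then G.map (homOfLE h.le) (a y) else 0) = g) ∧
    (∀ x : P, r x = 1 →
      (∀ a a' : C.Λ x, (∀ y, C.δ x y a = C.δ x y a') → a = a') ∧
      (∀ a : C.Λ x,
        (∑ᶠ y : P, if h : y < x ∧ r y = 0 then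
          G.map (homOfLE h.1.le) (C.e y y le_rfl h.2 (C.δ x y a)) else 0) = 0) ∧
      (∀ g : ∀ y : P, G.obj y, {y : P | g y ≠ 0}.Finite →
        (∀ y, g y ≠ 0 → y < x) →
        (∑ᶠ y : P, if h : y < x then G.map (homOfLE h.le) (g y) else 0) = 0 →
        ∃ a : C.Λ x, ∀ (y : P) (_ : y < x) (h0 : r y = 0),
          C.e y y le_rfl h0 (C.δ x y a) = g y)) ∧
    ((∀ y : P, Module.Free ℤ (G.obj y)) → ∀ x : P, Module.Free ℤ (C.Λ x)) := by
  refine ⟨fun x hx g => C.exists_sum_map_eq hx g, fun x hx => ⟨?_, ?_, ?_⟩,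
    fun hG x => C.free_of_rank_eq hr hG _ x rfl⟩
  · exact fun a a' h => C.delta_injective hr (by omega) (funext fun y => h y)
  · exact C.sum_map_e_delta_eq_zero hr hx
  · exact fun g => C.exists_e_delta_eq hr hx g
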